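/- If r(λ) admits an asymptotic expansion ∑_j b_j(-λ)^{β_j} as λ → 0 with -1 ≤ β₀ < β₁ < ..., then the relative spectral measure e(v) = (v/(πi))·lim_{ε→0⁺}[r(v²e^{i(2π-ε)}) - r(v²e^{iε})] satisfies e(v) = O(v^{1+2β_J}) as v → 0⁺, where β_J is the smallest non-integer exponent in the expansion. -/

import Mathlib

open MeasureTheory Real Filter Set Topology Asymptotics

lemma aux_cpow (v θ βj : ℝ) (hv : 0 < v) (hθ1 : 0 < θ) (hθ2 : θ < 2 * π) :
    (-((v:ℂ) ^ 2 * Complex.exp (Complex.I * θ))) ^ (βj : ℂ)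
      = ((v ^ (2 * βj) : ℝ) : ℂ) * Complex.exp (Complex.I * βj * ((θ : ℂ) - π)) := by
  have hπ := Real.pi_pos
  have hv2 : (0:ℝ) < v ^ 2 := by positivity
  have hbase : (-((v:ℂ) ^ 2 * Complex.exp (Complex.I * θ)))
      = ((v ^ 2 : ℝ) : ℂ) * Complex.exp (((θ - π : ℝ) : ℂ) * Complex.I) := by
    have h1 : Complex.exp (((θ - π : ℝ) : ℂ) * Complex.I)
        = Complex.exp (Complex.I * θ) * Complex.exp (-((π : ℂ) * Complex.I)) := by
      rw [← Complex.exp_add]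
      push_cast
      ring_nf
    rw [h1, Complex.exp_neg, Complex.exp_pi_mul_I]
    push_cast
    ring
  have hexpne : Complex.exp (((θ - π : ℝ) : ℂ) * Complex.I) ≠ 0 := Complex.exp_ne_zero _
  have hne : (-((v:ℂ) ^ 2 * Complex.exp (Complex.I * θ))) ≠ 0 := by
    rw [hbase]
    exact mul_ne_zero (by exact_mod_cast hv2.ne') hexpne
  rw [Complex.cpow_def_of_ne_zero hne, hbase, Complex.log_ofReal_mul hv2 hexpne,
    Complex.log_exp (by simpa using by linarith : -π < (((θ - π : ℝ) : ℂ) * Complex.I).im)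
      (by simpa using by linarith)]
  rw [add_mul, Complex.exp_add]
  congr 1
  · rw [show ((Real.log (v^2) : ℝ) : ℂ) * βj = ((Real.log (v^2) * βj : ℝ) : ℂ) by push_cast; ring,
      ← Complex.ofReal_exp, ← Real.rpow_def_of_pos hv2]
    congr 1
    rw [← Real.rpow_natCast v 2, ← Real.rpow_mul hv.le]
    norm_num
  · congr 1
    push_cast
    ring


/-- Small-`v` behaviour of the relative spectral measure from condition (B.3).
Model the trace of the relative resolvent on the cut plane by
`R v θ = r(v² e^{iθ})` for `v > 0`, `θ ∈ (0, 2π)`.  Assume `r` admits an asymptotic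
expansion `∑_{j≤J} b_j (-λ)^{β_j}` as `λ → 0` (uniformly in the sector, with
remainder `O(|λ|^γ)`, `γ > β_J`), where `-1 ≤ β₀ < β₁ < ⋯ < β_J`, the exponents
`β_j` for `j < J` are integers and `β_J` is not an integer.  If
`e(v) = (v/(πi)) lim_{ε→0⁺}[R v (2π-ε) - R v ε]` exists for each `v > 0`, then
`e(v) = O(v^{1+2β_J})` as `v → 0⁺`. -/
theorem relative_spectral_measure_small_v
    (R : ℝ → ℝ → ℂ) (e : ℝ → ℂ) (J : ℕ) (β : ℕ → ℝ) (b : ℕ → ℂ)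
    (hmono : ∀ j < J, β j < β (j + 1)) (hβ0 : -1 ≤ β 0)
    (hint : ∀ j < J, ∃ n : ℤ, β j = (n : ℝ))
    (hJnotint : ∀ n : ℤ, β J ≠ (n : ℝ))
    (hexp : ∃ C γ v₀ : ℝ, β J < γ ∧ 0 < v₀ ∧
      ∀ v ∈ Ioo (0:ℝ) v₀, ∀ θ ∈ Ioo (0:ℝ) (2 * π),
        ‖R v θ - ∑ j ∈ Finset.range (J + 1),
            b j * (-((v:ℂ) ^ 2 * Complex.exp (Complex.I * θ))) ^ (β j : ℂ)‖ ≤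
          C * v ^ (2 * γ))
    (he : ∀ v : ℝ, 0 < v →
      Tendsto (fun ε : ℝ => ((v : ℂ) / (π * Complex.I)) * (R v (2 * π - ε) - R v ε))
        (𝓝[>] (0:ℝ)) (𝓝 (e v))) :
    e =O[𝓝[>] (0:ℝ)] fun v : ℝ => v ^ (1 + 2 * β J) := by
  obtain ⟨C, γ, v₀, hγ, hv₀, hbound⟩ := hexp
  have hπ := Real.pi_pos
  set C' : ℝ := max C 0 with hC'def
  have hC0 : 0 ≤ C' := le_max_right _ _
  have hCC : C ≤ C' := le_max_left _ _
  rw [Asymptotics.isBigO_iff]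
  refine ⟨(2 * ‖b J‖ + 2 * C') / π, ?_⟩
  filter_upwards [Ioo_mem_nhdsGT_of_mem
    (Set.left_mem_Ico.mpr (lt_min hv₀ one_pos))] with v hv
  obtain ⟨hv0, hvm⟩ := hv
  have hvv₀ : v < v₀ := hvm.trans_le (min_le_left _ _)
  have hv1 : v < 1 := hvm.trans_le (min_le_right _ _)
  set F : ℝ → ℂ := fun θ => ∑ j ∈ Finset.range (J+1),
    b j * ((v ^ (2 * β j) : ℝ) : ℂ) * Complex.exp (Complex.I * (β j : ℝ) * ((θ:ℂ) - π)) with hFdef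
  have hFeq : ∀ θ ∈ Ioo (0:ℝ) (2*π),
      (∑ j ∈ Finset.range (J + 1),
        b j * (-((v:ℂ) ^ 2 * Complex.exp (Complex.I * θ))) ^ (β j : ℂ)) = F θ := by
    intro θ hθ
    refine Finset.sum_congr rfl fun j _ => ?_
    rw [aux_cpow v θ (β j) hv0 hθ.1 hθ.2]; ring
  have hFcont : Continuous F := by
    apply continuous_finset_sum
    intro j _
    exact continuous_const.mul (Complex.continuous_exp.comp (by fun_prop))
  set X : ℂ := ((v:ℂ) / (π * Complex.I)) * (F (2*π) - F 0) with hXdef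
  have hD : Tendsto (fun ε : ℝ => ((v:ℂ) / (π * Complex.I)) * (F (2*π - ε) - F ε))
      (𝓝[>] (0:ℝ)) (𝓝 X) := by
    apply Tendsto.const_mul
    apply Tendsto.sub
    · have h1 : Tendsto (fun ε : ℝ => 2*π - ε) (𝓝[>] (0:ℝ)) (𝓝 (2*π)) := by
        have h2 : Tendsto (fun ε : ℝ => 2*π - ε) (𝓝 (0:ℝ)) (𝓝 (2*π - 0)) :=
          Tendsto.sub tendsto_const_nhds tendsto_id
        rw [sub_zero] at h2
        exact h2.mono_left nhdsWithin_le_nhds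
      exact (hFcont.tendsto (2*π)).comp h1
    · exact (hFcont.tendsto 0).mono_left nhdsWithin_le_nhds
  have hnorm_coef : ‖(v:ℂ) / ((π:ℂ) * Complex.I)‖ = v / π := by
    rw [norm_div, norm_mul]
    simp [Complex.norm_real, Complex.norm_I, abs_of_pos hv0, abs_of_pos hπ]
  have key : ‖e v - X‖ ≤ v / π * (2 * C' * v ^ (2*γ)) := by
    have hGlim : Tendsto (fun ε : ℝ =>
        ((v:ℂ)/(π*Complex.I)) * (R v (2*π-ε) - R v ε)
          - ((v:ℂ)/(π*Complex.I)) * (F (2*π-ε) - F ε))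
        (𝓝[>] (0:ℝ)) (𝓝 (e v - X)) := (he v hv0).sub hD
    refine le_of_tendsto hGlim.norm ?_
    filter_upwards [Ioo_mem_nhdsGT_of_mem (Set.left_mem_Ico.mpr hπ)] with ε hε
    obtain ⟨hε0, hεπ⟩ := hε
    have hθ1 : (2*π - ε) ∈ Ioo (0:ℝ) (2*π) := ⟨by linarith, by linarith⟩
    have hθ2 : ε ∈ Ioo (0:ℝ) (2*π) := ⟨hε0, by linarith⟩
    have hb1 : ‖R v (2*π-ε) - F (2*π-ε)‖ ≤ C * v ^ (2*γ) := by
      rw [← hFeq _ hθ1]; exact hbound v ⟨hv0, hvv₀⟩ _ hθ1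
    have hb2 : ‖R v ε - F ε‖ ≤ C * v ^ (2*γ) := by
      rw [← hFeq _ hθ2]; exact hbound v ⟨hv0, hvv₀⟩ _ hθ2
    have hrw : ((v:ℂ)/(π*Complex.I)) * (R v (2*π-ε) - R v ε)
        - ((v:ℂ)/(π*Complex.I)) * (F (2*π-ε) - F ε)
        = ((v:ℂ)/(π*Complex.I)) * ((R v (2*π-ε) - F (2*π-ε)) - (R v ε - F ε)) := by ring
    rw [hrw, norm_mul, hnorm_coef]
    have hin : ‖(R v (2*π-ε) - F (2*π-ε)) - (R v ε - F ε)‖ ≤ 2 * C' * v ^ (2*γ) := by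
      have h3 := (norm_sub_le (R v (2*π-ε) - F (2*π-ε)) (R v ε - F ε)).trans (add_le_add hb1 hb2)
      have h4 : (0:ℝ) < v ^ (2*γ) := Real.rpow_pos_of_pos hv0 _
      nlinarith
    exact mul_le_mul_of_nonneg_left hin (by positivity)
  -- bound the jump term
  have hexp_norm : ∀ θ : ℝ, ∀ j, ‖Complex.exp (Complex.I * (β j : ℝ) * ((θ:ℂ) - π))‖ = 1 := by
    intro θ j
    rw [Complex.norm_exp]
    have : (Complex.I * (β j : ℝ) * ((θ:ℂ) - π)).re = 0 := by simp
    rw [this, Real.exp_zero]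
  have hterm_norm : ∀ θ : ℝ,
      ‖b J * ((v ^ (2 * β J) : ℝ) : ℂ) * Complex.exp (Complex.I * (β J : ℝ) * ((θ:ℂ) - π))‖
        = ‖b J‖ * v ^ (2 * β J) := by
    intro θ
    rw [norm_mul, norm_mul, hexp_norm, mul_one, Complex.norm_real,
      Real.norm_eq_abs, abs_of_nonneg (Real.rpow_nonneg hv0.le _)]
  have hDbound : ‖F (2*π) - F 0‖ ≤ 2 * ‖b J‖ * v ^ (2 * β J) := by
    have hsum : F (2*π) - F 0
        = b J * ((v ^ (2 * β J) : ℝ) : ℂ) * Complex.exp (Complex.I * (β J : ℝ) * (((2*π:ℝ):ℂ) - π))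
          - b J * ((v ^ (2 * β J) : ℝ) : ℂ) * Complex.exp (Complex.I * (β J : ℝ) * (((0:ℝ):ℂ) - π)) := by
      rw [hFdef]
      simp only
      rw [← Finset.sum_sub_distrib, Finset.sum_eq_single J]
      · intro j hj hne
        have hjJ : j < J := lt_of_le_of_ne (Nat.lt_succ_iff.mp (Finset.mem_range.mp hj)) hne
        obtain ⟨n, hn⟩ := hint j hjJ
        have h2 : Complex.exp (Complex.I * (β j : ℝ) * (((2*π:ℝ):ℂ) - π))
            = Complex.exp (Complex.I * (β j : ℝ) * (((0:ℝ):ℂ) - π)) := by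
          have hA : Complex.I * ((β j : ℝ):ℂ) * (((2*π:ℝ):ℂ) - π)
              = Complex.I * ((β j : ℝ):ℂ) * (((0:ℝ):ℂ) - π) + (n:ℂ) * (2 * (π:ℂ) * Complex.I) := by
            rw [hn]; push_cast; ring
          rw [hA, Complex.exp_add, Complex.exp_int_mul_two_pi_mul_I, mul_one]
        rw [h2, sub_self]
      · intro h
        exact absurd (Finset.self_mem_range_succ J) h
    rw [hsum]
    calc ‖_ - _‖ ≤ ‖_‖ + ‖_‖ := norm_sub_le _ _
      _ ≤ 2 * ‖b J‖ * v ^ (2 * β J) := by rw [hterm_norm, hterm_norm]; ring_nf; exact le_refl _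
  have hXnorm : ‖X‖ ≤ v / π * (2 * ‖b J‖ * v ^ (2 * β J)) := by
    rw [hXdef, norm_mul, hnorm_coef]
    exact mul_le_mul_of_nonneg_left hDbound (by positivity)
  have hEv : ‖e v‖ ≤ ‖X‖ + ‖e v - X‖ := by
    calc ‖e v‖ = ‖X + (e v - X)‖ := by rw [add_sub_cancel]
      _ ≤ ‖X‖ + ‖e v - X‖ := norm_add_le _ _
  have hrpow_le : v ^ (2*γ) ≤ v ^ (2 * β J) :=
    Real.rpow_le_rpow_of_exponent_ge hv0 hv1.le (by linarith)
  have hnorm_rhs : ‖v ^ (1 + 2 * β J)‖ = v * v ^ (2 * β J) := by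
    rw [Real.norm_eq_abs, abs_of_pos (Real.rpow_pos_of_pos hv0 _), Real.rpow_add hv0,
      Real.rpow_one]
  rw [hnorm_rhs]
  calc ‖e v‖ ≤ ‖X‖ + ‖e v - X‖ := hEv
    _ ≤ v / π * (2 * ‖b J‖ * v ^ (2 * β J)) + v / π * (2 * C' * v ^ (2*γ)) :=
        add_le_add hXnorm key
    _ ≤ v / π * (2 * ‖b J‖ * v ^ (2 * β J)) + v / π * (2 * C' * v ^ (2 * β J)) := by
        gcongr
    _ = (2 * ‖b J‖ + 2 * C') / π * (v * v ^ (2 * β J)) := by ring
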